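/- arXiv:1707.05387 — 3 statements merged into one kernel-verified Lean document; each statement's English description precedes it below -/
import Mathlib

section
/- Let G be a 2-edge-connected graph and let e, f, g be three distinct edges of G. If {e,f} is a 2-edge cut of G and {f,g} is a 2-edge cut of G, then {e,g} is also a 2-edge cut of G. In other words, the relation 'lies in a common 2-edge cut with' is transitive on edges of a 2-edge-connected graph. -/
open Finset
open scoped Classical symmDiff

/-- The set of edges of `G` with exactly one endpoint in `S`. -/
noncomputable def cutEdges {V : Type*} [Fintype V] [DecidableEq V] (G : SimpleGraph V)
    [DecidableRel G.Adj] (S : Finset V) : Finset (Sym2 V) :=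
  G.edgeFinset.filter (fun e => ∃ u ∈ S, ∃ v, v ∉ S ∧ e = s(u, v))

/-- `{e, f}` forms a 2-edge cut of `G`. -/
def IsTwoEdgeCut {V : Type*} [Fintype V] [DecidableEq V] (G : SimpleGraph V)
    [DecidableRel G.Adj] (e f : Sym2 V) : Prop :=
  ∃ S : Finset V, S.Nonempty ∧ S ≠ Finset.univ ∧ cutEdges G S = {e, f}

lemma mem_cutEdges' {V : Type*} [Fintype V] [DecidableEq V] (G : SimpleGraph V)
    [DecidableRel G.Adj] (S : Finset V) (x y : V) :
    s(x, y) ∈ cutEdges G S ↔ G.Adj x y ∧ ((x ∈ S ∧ y ∉ S) ∨ (y ∈ S ∧ x ∉ S)) := by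
  simp only [cutEdges, Finset.mem_filter, SimpleGraph.mem_edgeFinset,
    SimpleGraph.mem_edgeSet]
  constructor
  · rintro ⟨hadj, u, hu, v, hv, h⟩
    rw [Sym2.eq_iff] at h
    rcases h with ⟨hx, hy⟩ | ⟨hx, hy⟩
    · exact ⟨hadj, Or.inl ⟨hx ▸ hu, hy ▸ hv⟩⟩
    · exact ⟨hadj, Or.inr ⟨hy ▸ hu, hx ▸ hv⟩⟩
  · rintro ⟨hadj, ⟨hx, hy⟩ | ⟨hy, hx⟩⟩
    · exact ⟨hadj, x, hx, y, hy, rfl⟩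
    · exact ⟨hadj, y, hy, x, hx, Sym2.eq_swap⟩

lemma cutEdges_symmDiff {V : Type*} [Fintype V] [DecidableEq V] (G : SimpleGraph V)
    [DecidableRel G.Adj] (S T : Finset V) :
    cutEdges G (S ∆ T) = (cutEdges G S) ∆ (cutEdges G T) := by
  ext a
  induction a using Sym2.ind with
  | _ x y =>
    rw [Finset.mem_symmDiff]
    simp only [mem_cutEdges', Finset.mem_symmDiff]
    by_cases hadj : G.Adj x y <;> by_cases hx : x ∈ S <;> by_cases hy : y ∈ S <;>
      by_cases hx' : x ∈ T <;> by_cases hy' : y ∈ T <;> simp_all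

lemma cutEdges_compl {V : Type*} [Fintype V] [DecidableEq V] (G : SimpleGraph V)
    [DecidableRel G.Adj] (S : Finset V) :
    cutEdges G Sᶜ = cutEdges G S := by
  ext a
  induction a using Sym2.ind with
  | _ x y => simp only [mem_cutEdges', Finset.mem_compl]; tauto

/-- In a 2-edge-connected graph, "lying in a common 2-edge cut" is transitive on edges. -/
theorem stmt1 {V : Type*} [Fintype V] [DecidableEq V] (G : SimpleGraph V) [DecidableRel G.Adj]
    (hconn : G.Connected)
    (h2ec : ∀ T : Finset V, T.Nonempty → T ≠ Finset.univ → 2 ≤ (cutEdges G T).card)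
    (e f g : Sym2 V) (he : e ∈ G.edgeSet) (hf : f ∈ G.edgeSet) (hg : g ∈ G.edgeSet)
    (hef : e ≠ f) (hfg : f ≠ g) (heg : e ≠ g)
    (h1 : IsTwoEdgeCut G e f) (h2 : IsTwoEdgeCut G f g) :
    IsTwoEdgeCut G e g := by
  obtain ⟨S, hSne, hSuniv, hS⟩ := h1
  obtain ⟨T, hTne, hTuniv, hT⟩ := h2
  refine ⟨S ∆ T, ?_, ?_, ?_⟩
  · rw [Finset.nonempty_iff_ne_empty]
    intro h
    have : S = T := by
      rwa [← Finset.bot_eq_empty, symmDiff_eq_bot] at h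
    rw [this, hT] at hS
    have : e ∈ ({f, g} : Finset (Sym2 V)) := hS ▸ by simp
    simp only [Finset.mem_insert, Finset.mem_singleton] at this
    tauto
  · intro h
    have hTc : T = Sᶜ := by
      ext v
      have hv : v ∈ S ∆ T := h ▸ Finset.mem_univ v
      rw [Finset.mem_symmDiff] at hv
      rw [Finset.mem_compl]
      tauto
    rw [hTc, cutEdges_compl, hS] at hT
    have : g ∈ ({e, f} : Finset (Sym2 V)) := hT ▸ by simp
    simp only [Finset.mem_insert, Finset.mem_singleton] at this
    tauto
  · rw [cutEdges_symmDiff, hS, hT]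
    ext a
    simp only [Finset.mem_symmDiff, Finset.mem_insert, Finset.mem_singleton]
    by_cases hae : a = e <;> by_cases haf : a = f <;> by_cases hag : a = g <;> simp_all
end

section
/- Let G be a cubic graph and let C be a cycle cover (2-factor) of G. Define x_e = 1/2 for e ∈ C and x_e = 1 for e ∈ E \ C. Then x satisfies the subtour elimination constraints whenever G is 3-edge-connected: for every nonempty proper vertex subset S, x(δ(S)) ≥ 2, and moreover x(δ(v)) = 2 holds exactly for each vertex v. -/
open Finset
open scoped Classical

section Aux

variable {V : Type*} [Fintype V] [DecidableEq V]

lemma cut_singleton (G : SimpleGraph V) [DecidableRel G.Adj] (v : V) :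
    cutEdges G {v} = G.incidenceFinset v := by
  ext e
  induction e using Sym2.ind with
  | _ a b =>
    simp only [cutEdges, Finset.mem_filter, SimpleGraph.mem_incidenceFinset,
      SimpleGraph.incidenceSet, Set.mem_setOf_eq, SimpleGraph.mem_edgeFinset,
      Finset.mem_singleton, Set.mem_sep_iff]
    constructor
    · rintro ⟨he, u, rfl, w, hw, hew⟩
      refine ⟨he, ?_⟩
      rw [hew]; exact Sym2.mem_mk_left _ _
    · rintro ⟨he, hv⟩
      refine ⟨he, ?_⟩
      rw [Sym2.mem_iff] at hv
      rw [SimpleGraph.mem_edgeSet] at he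
      rcases hv with h | h
      · exact ⟨v, rfl, b, fun hb => G.ne_of_adj he (hb.trans h).symm, by rw [h]⟩
      · exact ⟨v, rfl, a, fun ha => G.ne_of_adj he (ha.trans h), by rw [h, Sym2.eq_swap]⟩

lemma card_cut_eq_pairs (C : SimpleGraph V) [DecidableRel C.Adj] (S : Finset V) :
    (cutEdges C S).card = ((S ×ˢ Sᶜ).filter fun p => C.Adj p.1 p.2).card := by
  symm
  apply Finset.card_bij (fun p _ => s(p.1, p.2))
  · rintro ⟨u, w⟩ hp
    simp only [Finset.mem_filter, Finset.mem_product, Finset.mem_compl] at hp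
    simp only [cutEdges, Finset.mem_filter, SimpleGraph.mem_edgeFinset,
      SimpleGraph.mem_edgeSet]
    exact ⟨hp.2, u, hp.1.1, w, hp.1.2, rfl⟩
  · rintro ⟨u, w⟩ hp ⟨u', w'⟩ hp' h
    simp only [Finset.mem_filter, Finset.mem_product, Finset.mem_compl] at hp hp'
    rw [Sym2.eq_iff] at h
    rcases h with ⟨rfl, rfl⟩ | ⟨rfl, rfl⟩
    · rfl
    · exact absurd hp'.1.1 hp.1.2
  · intro e he
    simp only [cutEdges, Finset.mem_filter, SimpleGraph.mem_edgeFinset] at he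
    obtain ⟨he, u, hu, w, hw, rfl⟩ := he
    rw [SimpleGraph.mem_edgeSet] at he
    exact ⟨(u, w), by simp [hu, hw, he], rfl⟩

lemma even_card_cut (C : SimpleGraph V) [DecidableRel C.Adj]
    (h2 : ∀ v, Even (C.degree v)) (S : Finset V) : Even (cutEdges C S).card := by
  have key : ((cutEdges C S).card : ZMod 2) = 0 := by
    rw [card_cut_eq_pairs, Finset.card_filter]
    push_cast
    rw [Finset.sum_product]
    have hdeg : ∀ u : V, (∑ w, (if C.Adj u w then (1 : ZMod 2) else 0)) = 0 := by
      intro u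
      rw [← Finset.sum_filter, Finset.sum_const, nsmul_eq_mul, mul_one]
      have hfil : Finset.univ.filter (fun w => C.Adj u w) = C.neighborFinset u := by
        ext w; simp
      rw [hfil]
      obtain ⟨k, hk⟩ := h2 u
      show ((C.degree u : ℕ) : ZMod 2) = 0
      rw [hk, Nat.cast_add, CharTwo.add_self_eq_zero]
    have hinner : (∑ u ∈ S, ∑ w ∈ S, (if C.Adj u w then (1 : ZMod 2) else 0)) = 0 := by
      rw [← Finset.sum_product']
      refine Finset.sum_involution (fun p _ => p.swap) ?_ ?_
        (fun p hp => by
          simp only [Finset.mem_product] at hp ⊢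
          exact ⟨hp.2, hp.1⟩)
        (fun p _ => rfl)
      · intro p _
        by_cases h : C.Adj p.1 p.2
        · have h' : C.Adj p.2 p.1 := h.symm
          simp only [Prod.fst_swap, Prod.snd_swap, h, h', if_true]
          decide
        · have h' : ¬ C.Adj p.2 p.1 := fun hh => h hh.symm
          simp [h, h']
      · intro p _ hne
        by_cases h : C.Adj p.1 p.2
        · intro hs
          have h21 : p.2 = p.1 := by simpa using congrArg Prod.fst hs
          exact C.ne_of_adj h h21.symm
        · simp [h] at hne
    have hsplit : ∀ u : V, (∑ w ∈ Sᶜ, (if C.Adj u w then (1 : ZMod 2) else 0))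
        = (∑ w, (if C.Adj u w then (1 : ZMod 2) else 0))
          - (∑ w ∈ S, (if C.Adj u w then (1 : ZMod 2) else 0)) := by
      intro u
      rw [eq_sub_iff_add_eq, add_comm]
      exact Finset.sum_add_sum_compl S _
    calc (∑ u ∈ S, ∑ w ∈ Sᶜ, (if C.Adj u w then (1 : ZMod 2) else 0))
        = (∑ u ∈ S, ((∑ w, (if C.Adj u w then (1 : ZMod 2) else 0))
            - ∑ w ∈ S, (if C.Adj u w then (1 : ZMod 2) else 0))) := by
          exact Finset.sum_congr rfl fun u _ => hsplit u
      _ = (∑ u ∈ S, ∑ w, (if C.Adj u w then (1 : ZMod 2) else 0))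
            - ∑ u ∈ S, ∑ w ∈ S, (if C.Adj u w then (1 : ZMod 2) else 0) := by
          rw [Finset.sum_sub_distrib]
      _ = 0 := by
          rw [hinner, Finset.sum_congr rfl fun u _ => hdeg u]
          simp
  have := (ZMod.natCast_eq_zero_iff _ 2).mp key
  exact even_iff_two_dvd.mpr this

end Aux

/-- In a 3-edge-connected cubic graph with a 2-factor `C`, the vector with value `1/2` on
`C` and `1` off `C` satisfies all subtour constraints, with equality (value exactly 2)
on each vertex cut. -/
theorem stmt10 {V : Type*} [Fintype V] [DecidableEq V] (G C : SimpleGraph V)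
    [DecidableRel G.Adj] [DecidableRel C.Adj]
    (hcub : ∀ v : V, G.degree v = 3)
    (h3ec : ∀ T : Finset V, T.Nonempty → T ≠ Finset.univ → 3 ≤ (cutEdges G T).card)
    (hCG : C ≤ G) (h2f : ∀ v : V, C.degree v = 2) :
    (∀ S : Finset V, S.Nonempty → S ≠ Finset.univ →
        2 ≤ ∑ e ∈ cutEdges G S, (if e ∈ C.edgeFinset then (1/2 : ℝ) else 1)) ∧
    (∀ v : V, ∑ e ∈ cutEdges G {v}, (if e ∈ C.edgeFinset then (1/2 : ℝ) else 1) = 2) := by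
  have hfilter : ∀ S : Finset V,
      (cutEdges G S).filter (fun e => e ∈ C.edgeFinset) = cutEdges C S := by
    intro S
    ext e
    simp only [cutEdges, Finset.mem_filter, SimpleGraph.mem_edgeFinset]
    constructor
    · rintro ⟨⟨_, hP⟩, hC⟩
      exact ⟨hC, hP⟩
    · rintro ⟨hC, hP⟩
      exact ⟨⟨SimpleGraph.edgeSet_mono hCG hC, hP⟩, hC⟩
  have hsum : ∀ S : Finset V,
      (∑ e ∈ cutEdges G S, (if e ∈ C.edgeFinset then (1/2 : ℝ) else 1))
        = ((cutEdges G S).card : ℝ) - ((cutEdges C S).card : ℝ) / 2 := by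
    intro S
    rw [Finset.sum_ite, Finset.sum_const, Finset.sum_const, hfilter S]
    have hcards : ((cutEdges G S).filter (fun e => ¬ e ∈ C.edgeFinset)).card
        = (cutEdges G S).card - (cutEdges C S).card := by
      have := Finset.card_filter_add_card_filter_not
        (s := cutEdges G S) (p := fun e => e ∈ C.edgeFinset)
      rw [hfilter S] at this
      omega
    have hle : (cutEdges C S).card ≤ (cutEdges G S).card := by
      rw [← hfilter S]; exact Finset.card_filter_le _ _
    rw [hcards, nsmul_eq_mul, nsmul_eq_mul]
    push_cast [Nat.cast_sub hle]
    ring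
  constructor
  · intro S hS hSne
    rw [hsum S]
    have ha := h3ec S hS hSne
    have hb : (cutEdges C S).card ≤ (cutEdges G S).card := by
      rw [← hfilter S]; exact Finset.card_filter_le _ _
    obtain ⟨k, hk⟩ := even_card_cut C (fun v => by rw [h2f v]; exact ⟨1, rfl⟩) S
    have hkle : k + 2 ≤ (cutEdges G S).card := by omega
    have h1 : ((cutEdges C S).card : ℝ) = k + k := by exact_mod_cast hk
    have h2 : (k : ℝ) + 2 ≤ ((cutEdges G S).card : ℝ) := by exact_mod_cast hkle
    rw [h1]
    linarith
  · intro v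
    rw [hsum {v}]
    have hG : (cutEdges G {v}).card = 3 := by
      rw [cut_singleton, G.card_incidenceFinset_eq_degree, hcub]
    have hC : (cutEdges C {v}).card = 2 := by
      rw [cut_singleton, C.card_incidenceFinset_eq_degree, h2f]
    rw [hG, hC]
    norm_num
end

section
/- Let F be a spanning connected multigraph of a graph G such that F crosses every 2-edge cut of G an even number of times, and let T be the set of vertices of odd degree in F. Then the everywhere-1/3 vector is a feasible solution of the T-join dominant LP: for every S ⊆ V with |S ∩ T| odd, (1/3)·|δ_G(S)| ≥ 1. -/
/-!
Summing the `F`-degrees over `S` counts every `F`-edge inside `S` twice and every `F`-edge of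
`δ(S)` once, so `|S ∩ T|` has the parity of the number of `F`-edges in `δ(S)`. A `T`-odd cut
therefore carries an odd number of `F`-edges: it is nonempty, hence has at least two edges by
2-edge-connectivity, and not exactly two by the parity hypothesis on `F`.
-/

open Finset
open scoped Classical

section
variable {V : Type*} [Fintype V] [DecidableEq V] (G : SimpleGraph V) [DecidableRel G.Adj]

theorem mk_mem_cutEdges_iff {S : Finset V} {a b : V} :
    s(a, b) ∈ cutEdges G S ↔ G.Adj a b ∧ (a ∈ S ↔ b ∉ S) := by
  simp only [cutEdges, mem_filter, SimpleGraph.mem_edgeFinset, SimpleGraph.mem_edgeSet,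
    Sym2.eq_iff]
  constructor
  · rintro ⟨hab, u, hu, v, hv, ⟨rfl, rfl⟩ | ⟨rfl, rfl⟩⟩ <;> tauto
  · rintro ⟨hab, hS⟩
    refine ⟨hab, ?_⟩
    by_cases ha : a ∈ S
    · exact ⟨a, ha, b, hS.1 ha, .inl ⟨rfl, rfl⟩⟩
    · exact ⟨b, not_not.1 (mt hS.2 ha), a, ha, .inr ⟨rfl, rfl⟩⟩

theorem odd_card_filter_mem_iff_mem_cutEdges (S : Finset V) {e : Sym2 V}
    (he : e ∈ G.edgeSet) : Odd #{v ∈ S | v ∈ e} ↔ e ∈ cutEdges G S := by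
  induction e using Sym2.ind with
  | _ a b =>
  have hab : a ≠ b := G.ne_of_adj he
  rw [mk_mem_cutEdges_iff, and_iff_right (G.mem_edgeSet.1 he),
    show S.filter (· ∈ s(a, b)) = ({a, b} : Finset V).filter (· ∈ S) by
      ext; simp [and_comm]]
  by_cases ha : a ∈ S <;> by_cases hb : b ∈ S <;>
    simp [filter_insert, filter_singleton, ha, hb, hab]

def multiDegree (m : Sym2 V → ℕ) (v : V) : ℕ :=
  ∑ e ∈ G.edgeFinset.filter (fun e => v ∈ e), m e

theorem sum_multiDegree (m : Sym2 V → ℕ) (S : Finset V) :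
    ∑ v ∈ S, multiDegree G m v = ∑ e ∈ G.edgeFinset, #{v ∈ S | v ∈ e} * m e := by
  simp only [multiDegree, sum_filter]
  rw [sum_comm]
  simp [← sum_filter]

theorem odd_card_filter_odd_multiDegree_iff (m : Sym2 V → ℕ) (S : Finset V) :
    Odd #{v ∈ S | Odd (multiDegree G m v)} ↔ Odd (∑ e ∈ cutEdges G S, m e) := by
  rw [← odd_sum_iff_odd_card_odd, sum_multiDegree, odd_sum_iff_odd_card_odd,
    odd_sum_iff_odd_card_odd, cutEdges, filter_filter]
  congr! 3 with e he
  rw [Nat.odd_mul, odd_card_filter_mem_iff_mem_cutEdges G S (SimpleGraph.mem_edgeFinset.1 he),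
    cutEdges, mem_filter, and_iff_right he]

theorem nonempty_and_ne_univ_of_cutEdges_nonempty {S : Finset V}
    (h : (cutEdges G S).Nonempty) : S.Nonempty ∧ S ≠ univ :=
  let ⟨_, he⟩ := h
  let ⟨_, u, hu, v, hv, _⟩ := mem_filter.1 he
  ⟨⟨u, hu⟩, fun hS => hv (hS ▸ mem_univ v)⟩

theorem three_le_card_cutEdges
    (h2ec : ∀ T : Finset V, T.Nonempty → T ≠ univ → 2 ≤ #(cutEdges G T))
    {m : Sym2 V → ℕ}
    (heven : ∀ S : Finset V, #(cutEdges G S) = 2 → Even (∑ e ∈ cutEdges G S, m e))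
    {S : Finset V} (hodd : Odd (∑ e ∈ cutEdges G S, m e)) : 3 ≤ #(cutEdges G S) := by
  have hcut : (cutEdges G S).Nonempty := nonempty_of_sum_ne_zero hodd.pos.ne'
  obtain ⟨hS, hSu⟩ := nonempty_and_ne_univ_of_cutEdges_nonempty G hcut
  have hne2 : #(cutEdges G S) ≠ 2 := fun h => Nat.not_even_iff_odd.2 hodd (heven S h)
  have := h2ec S hS hSu
  omega

end

theorem stmt11_general {V : Type*} [Fintype V] [DecidableEq V] (G : SimpleGraph V) [DecidableRel G.Adj]
    (h2ec : ∀ T : Finset V, T.Nonempty → T ≠ Finset.univ → 2 ≤ (cutEdges G T).card)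
    (m : Sym2 V → ℕ)
    (heven : ∀ S : Finset V, (cutEdges G S).card = 2 → Even (∑ e ∈ cutEdges G S, m e))
    (T : Finset V)
    (hT : T = Finset.univ.filter
      (fun v => Odd (∑ e ∈ G.edgeFinset.filter (fun e => v ∈ e), m e))) :
    ∀ S : Finset V, Odd ((S ∩ T).card) →
      1 ≤ (1/3 : ℝ) * (cutEdges G S).card := by
  intro S hST
  have hS : S ∩ T = {v ∈ S | Odd (multiDegree G m v)} := by
    rw [hT, inter_filter, inter_univ]
    rfl
  rw [hS, odd_card_filter_odd_multiDegree_iff] at hST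
  have h3 : (3 : ℝ) ≤ #(cutEdges G S) := by
    exact_mod_cast three_le_card_cutEdges G h2ec heven hST
  linarith

/-- Let `F` be a spanning connected multigraph of a 2-edge-connected graph `G` (given by
a multiplicity function `m` with values at most 2) crossing every 2-edge cut an even
number of times, and let `T` be its odd-degree vertices. Then the everywhere-1/3 vector
is feasible for the `T`-join dominant LP: every `T`-odd cut has value at least 1. -/
theorem stmt11 {V : Type*} [Fintype V] [DecidableEq V] (G : SimpleGraph V) [DecidableRel G.Adj]
    (hconn : G.Connected)
    (h2ec : ∀ T : Finset V, T.Nonempty → T ≠ Finset.univ → 2 ≤ (cutEdges G T).card)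
    (m : Sym2 V → ℕ) (hm2 : ∀ e, m e ≤ 2) (hmE : ∀ e, 0 < m e → e ∈ G.edgeSet)
    (hFconn : (SimpleGraph.fromEdgeSet {e : Sym2 V | 0 < m e}).Connected)
    (heven : ∀ S : Finset V, (cutEdges G S).card = 2 → Even (∑ e ∈ cutEdges G S, m e))
    (T : Finset V)
    (hT : T = Finset.univ.filter
      (fun v => Odd (∑ e ∈ G.edgeFinset.filter (fun e => v ∈ e), m e))) :
    ∀ S : Finset V, Odd ((S ∩ T).card) →
      1 ≤ (1/3 : ℝ) * (cutEdges G S).card :=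
  stmt11_general G h2ec m heven T hT
end
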